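/- arXiv:1908.05259 — 7 statements merged into one kernel-verified Lean document; each statement's English description precedes it below -/
import Mathlib

section
/- Let p be a prime and m ≥ 2. Suppose d and i are nonnegative integers with d = p^(m-1) + (p-1)a and i = 1 + pa for some integer a with 0 ≤ a < 1 + p + ... + p^(m-2), and suppose d < 2p^(m-1) - 1. Then the binomial coefficient C(d, i) is congruent to 0 modulo p. -/
/-!
Write `s(n)` for the base-`p` digit sum and `K = m - 1`. By Kummer's theorem,
`(p - 1) v_p(C(d, i)) = s(i) + s(d - i) - s(d)`. Here `s(d) = 1 + s((p - 1) a)` and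
`s(i) = 1 + s(a)`, while `a + (d - i) = p^K - 1` adds up without carries, so
`s(a) + s(d - i) = K (p - 1)`. The right-hand side is therefore `K (p - 1) - s((p - 1) a)`,
which is positive because `(p - 1) a < p^K - 1` is not the number with all digits `p - 1`.
-/

namespace Nat

variable {b : ℕ}

theorem digits_sum_add_base_pow_mul (hb : 1 < b) {x : ℕ} (k y : ℕ) (hx : x < b ^ k) :
    (b.digits (x + b ^ k * y)).sum = (b.digits x).sum + (b.digits y).sum := by
  rcases y.eq_zero_or_pos with rfl | hy
  · simp
  have hlen : (b.digits x).length ≤ k := (digits_length_le_iff hb x).2 hx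
  have h := digits_append_zeroes_append_digits (k := k - (b.digits x).length) (n := x) hb hy
  rw [Nat.add_sub_cancel' hlen] at h
  simp [← h]

theorem digits_sum_of_lt {x : ℕ} (hx : x < b) : (b.digits x).sum = x := by
  rcases x.eq_zero_or_pos with rfl | hx0
  · simp
  · simp [digits_of_lt b x hx0.ne' hx]

theorem digits_sum_add_base_mul (hb : 1 < b) {x : ℕ} (y : ℕ) (hx : x < b) :
    (b.digits (x + b * y)).sum = x + (b.digits y).sum := by
  have h := digits_sum_add_base_pow_mul hb 1 y (x := x) (by rwa [pow_one])
  rwa [pow_one, digits_sum_of_lt hx] at h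

theorem digits_sum_add_digits_sum_of_add_add_one_eq_pow (hb : 1 < b) {k x y : ℕ}
    (h : x + y + 1 = b ^ k) : (b.digits x).sum + (b.digits y).sum = k * (b - 1) := by
  induction k generalizing x y with
  | zero =>
    obtain ⟨rfl, rfl⟩ : x = 0 ∧ y = 0 := by rw [pow_zero] at h; omega
    simp
  | succ k ih =>
    have hb0 : 0 < b := by omega
    have hxr := Nat.mod_lt x hb0
    have hyr := Nat.mod_lt y hb0
    rw [← Nat.mod_add_div x b, ← Nat.mod_add_div y b] at h ⊢
    rw [digits_sum_add_base_mul hb _ hxr, digits_sum_add_base_mul hb _ hyr]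
    have hlow : x % b + y % b + 1 = b := by
      have hdvd : b ∣ b * (x / b + y / b) + (x % b + y % b + 1) :=
        ⟨b ^ k, by rw [← pow_succ', ← h]; ring⟩
      exact Nat.eq_of_dvd_of_lt_two_mul (by omega)
        ((Nat.dvd_add_right (dvd_mul_right _ _)).1 hdvd) (by omega)
    have hhigh : x / b + y / b + 1 = b ^ k := by
      refine Nat.eq_of_mul_eq_mul_left hb0 ?_
      rw [← pow_succ', ← h]
      linarith
    have := ih hhigh
    rw [add_mul, one_mul]
    omega

theorem digits_sum_lt_of_add_one_lt_pow (hb : 1 < b) {k n : ℕ} (hn : n + 1 < b ^ k) :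
    (b.digits n).sum < k * (b - 1) := by
  have hpos : 0 < (b.digits (b ^ k - 1 - n)).sum := by
    have hne : b ^ k - 1 - n ≠ 0 := by omega
    exact lt_of_lt_of_le (Nat.pos_of_ne_zero (getLast_digit_ne_zero b hne))
      (List.le_sum_of_mem (List.getLast_mem _))
  have := digits_sum_add_digits_sum_of_add_add_one_eq_pow hb
    (show n + (b ^ k - 1 - n) + 1 = b ^ k by omega)
  omega

end Nat

theorem Nat.Prime.dvd_choose_of_digits_sum_lt {p n k : ℕ} (hp : p.Prime) (hkn : k ≤ n)
    (h : (p.digits n).sum < (p.digits k).sum + (p.digits (n - k)).sum) : p ∣ n.choose k := by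
  have := Fact.mk hp
  have hv := sub_one_mul_padicValNat_choose_eq_sub_sum_digits (p := p) hkn
  refine dvd_of_one_le_padicValNat (Nat.one_le_iff_ne_zero.2 fun h0 => ?_)
  rw [h0, mul_zero] at hv
  omega

theorem stmt_1_general (p m a d i : ℕ) (hp : p.Prime)
    (hd : d = p ^ (m - 1) + (p - 1) * a)
    (hi : i = 1 + p * a)
    (hlt : d < 2 * p ^ (m - 1) - 1) :
    Nat.choose d i % p = 0 := by
  have hp1 := hp.one_lt
  have hn : (p - 1) * a + 1 < p ^ (m - 1) := by omega
  have hpa : p * a = (p - 1) * a + a := by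
    rw [Nat.sub_one_mul, Nat.sub_add_cancel (Nat.le_mul_of_pos_left a hp.pos)]
  have ha : a + 1 ≤ p ^ (m - 1) := by
    have := Nat.le_mul_of_pos_left a (Nat.sub_pos_of_lt hp1)
    omega
  have hdi : d - i = p ^ (m - 1) - 1 - a := by omega
  refine Nat.mod_eq_zero_of_dvd (hp.dvd_choose_of_digits_sum_lt (by omega) ?_)
  have hsd : (p.digits d).sum = (p.digits ((p - 1) * a)).sum + 1 := by
    simpa [hd, add_comm, Nat.digits_sum_of_lt hp1] using
      Nat.digits_sum_add_base_pow_mul hp1 (m - 1) 1 (x := (p - 1) * a) (by omega)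
  rw [hsd, hdi, hi, Nat.digits_sum_add_base_mul hp1 _ hp1]
  have hcompl := Nat.digits_sum_add_digits_sum_of_add_add_one_eq_pow hp1
    (show a + (p ^ (m - 1) - 1 - a) + 1 = p ^ (m - 1) by omega)
  have hsmall := Nat.digits_sum_lt_of_add_one_lt_pow hp1 hn
  omega

/-- Lucas-type vanishing of the binomial coefficient `C(d, i)` mod `p`. -/
theorem stmt_1 (p m a d i : ℕ) (hp : p.Prime) (hm : 2 ≤ m)
    (ha : a < ∑ k ∈ Finset.range (m - 1), p ^ k)
    (hd : d = p ^ (m - 1) + (p - 1) * a)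
    (hi : i = 1 + p * a)
    (hlt : d < 2 * p ^ (m - 1) - 1) :
    Nat.choose d i % p = 0 :=
  stmt_1_general p m a d i hp hd hi hlt
end

section
/- In the polynomial ring F_q[x_1,...,x_n], for any index a < n and integer m ≥ 1, the identity Σ_{k=0}^{m-1} (x_n^e)^{1 + e^{-1}(q^m - q^{m-k})} · (x_a^q - x_a x_n^{q-1})^{q^{m-k-1}} = x_a^{q^m} x_n^e − x_a x_n^{q^m + e - 1} holds, where e divides q−1 (so that e^{-1}(q^m - q^{m-k}) is a nonnegative integer). -/
open MvPolynomial Finset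

/-
Writing `Z = x_a`, `Y = x_n` and `g i = Z^{q^i} Y^{q^m - q^i + e}`, the `q^j`-th power Frobenius
turns `Y^{q^m - q^{j+1} + e} (Z^q - Z Y^{q-1})^{q^j}` into `g (j+1) - g j`, so the sum telescopes
to `g m - g 0`, which is the right-hand side.
-/

theorem Nat.dvd_pow_sub_pow_of_dvd_sub_one {q e i m : ℕ} (he : e ∣ q - 1) (hi : i ≤ m) :
    e ∣ q ^ m - q ^ i := by
  have hfactor : q ^ m - q ^ i = q ^ i * (q ^ (m - i) - 1) := by
    rw [Nat.mul_sub, mul_one, ← pow_add, Nat.add_sub_cancel' hi]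
  exact hfactor ▸ (he.trans (Nat.sub_one_dvd_pow_sub_one q _)).mul_left _

section Telescoping

variable {R : Type*} [CommRing R] {p : ℕ} [ExpChar R p] {q r : ℕ} (hq : q = p ^ r) (Z Y : R)
include hq

theorem sub_mul_pow_sub_one_pow_pow (j : ℕ) :
    (Z ^ q - Z * Y ^ (q - 1)) ^ q ^ j
      = Z ^ q ^ (j + 1) - Z ^ q ^ j * Y ^ (q ^ (j + 1) - q ^ j) := by
  have hfrob : ∀ x y : R, (x - y) ^ q ^ j = x ^ q ^ j - y ^ q ^ j := fun x y => by
    rw [hq, ← pow_mul]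
    exact sub_pow_expChar_pow x y _
  have hexp : (q - 1) * q ^ j = q ^ (j + 1) - q ^ j := by
    rw [Nat.sub_mul, one_mul, pow_succ']
  rw [hfrob, mul_pow, ← pow_mul, ← pow_mul, ← pow_succ', mul_comm _ (q ^ j), ← hexp,
    mul_comm (q - 1)]

theorem pow_mul_sub_mul_pow_sub_one_pow_pow {m e j : ℕ} (he : e ∣ q - 1) (hj : j < m) :
    (Y ^ e) ^ (1 + (q ^ m - q ^ (j + 1)) / e) * (Z ^ q - Z * Y ^ (q - 1)) ^ q ^ j
      = Z ^ q ^ (j + 1) * Y ^ (q ^ m - q ^ (j + 1) + e)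
        - Z ^ q ^ j * Y ^ (q ^ m - q ^ j + e) := by
  have hq0 : 0 < q := hq ▸ expChar_pow_pos R p r
  have hle : q ^ j ≤ q ^ (j + 1) := Nat.pow_le_pow_right hq0 j.le_succ
  have hle' : q ^ (j + 1) ≤ q ^ m := Nat.pow_le_pow_right hq0 hj
  have hdiv : e * (1 + (q ^ m - q ^ (j + 1)) / e) = q ^ m - q ^ (j + 1) + e := by
    rw [Nat.mul_add, mul_one, Nat.mul_div_cancel' (Nat.dvd_pow_sub_pow_of_dvd_sub_one he hj),
      add_comm]
  rw [← pow_mul, hdiv, sub_mul_pow_sub_one_pow_pow hq, mul_sub, mul_comm, mul_left_comm,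
    ← pow_add]
  congr 3
  omega

end Telescoping

theorem stmt_2_general (p r q n m e : ℕ) (hp : p.Prime) (hq : q = p ^ r)
    (F : Type) [Field F] [CharP F p]
    (he : e ∣ q - 1) (a : Fin n) :
    ∑ k ∈ Finset.range m,
        ((X (Fin.last n) : MvPolynomial (Fin (n + 1)) F) ^ e) ^ (1 + (q ^ m - q ^ (m - k)) / e) *
          (X a.castSucc ^ q - X a.castSucc * X (Fin.last n) ^ (q - 1)) ^ q ^ (m - k - 1)
      = X a.castSucc ^ q ^ m * X (Fin.last n) ^ e
          - X a.castSucc * X (Fin.last n) ^ (q ^ m + e - 1) := by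
  have := ExpChar.prime (R := MvPolynomial (Fin (n + 1)) F) hp
  set Z : MvPolynomial (Fin (n + 1)) F := X a.castSucc
  set Y : MvPolynomial (Fin (n + 1)) F := X (Fin.last n)
  let term j := (Y ^ e) ^ (1 + (q ^ m - q ^ (j + 1)) / e) * (Z ^ q - Z * Y ^ (q - 1)) ^ q ^ j
  have hreindex : ∀ k ∈ range m, (Y ^ e) ^ (1 + (q ^ m - q ^ (m - k)) / e) *
      (Z ^ q - Z * Y ^ (q - 1)) ^ q ^ (m - k - 1) = term (m - 1 - k) := fun k hk => by
    have hk : m - k - 1 + 1 = m - k := by rw [mem_range] at hk; omega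
    simp only [term, hk, Nat.sub_right_comm m 1 k]
  have hq1 : 1 ≤ q ^ m := Nat.one_le_pow _ _ (hq ▸ pow_pos hp.pos r)
  rw [sum_congr rfl hreindex, sum_range_reflect term m,
    sum_congr rfl fun j hj => pow_mul_sub_mul_pow_sub_one_pow_pow hq Z Y he (mem_range.mp hj),
    sum_range_sub (fun i => Z ^ q ^ i * Y ^ (q ^ m - q ^ i + e))]
  simp only [pow_zero, pow_one, Nat.sub_self, zero_add]
  rw [Nat.sub_add_comm hq1]

/-- The telescoping identity
`Σ_{k=0}^{m-1} (x_n^e)^{1 + e⁻¹(q^m - q^{m-k})} · (x_a^q - x_a x_n^{q-1})^{q^{m-k-1}}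
  = x_a^{q^m} x_n^e − x_a x_n^{q^m + e - 1}`
in `F_q[x_1, …, x_{n+1}]`, where `x_{n+1}` plays the role of `x_n` of the paper. -/
theorem stmt_2 (p r q n m e : ℕ) (hp : p.Prime) (hr : 1 ≤ r) (hq : q = p ^ r)
    (F : Type) [Field F] [CharP F p] [Fintype F] (hF : Fintype.card F = q)
    (hm : 1 ≤ m) (he : e ∣ q - 1) (he0 : 0 < e) (a : Fin n) :
    ∑ k ∈ Finset.range m,
        ((X (Fin.last n) : MvPolynomial (Fin (n + 1)) F) ^ e) ^ (1 + (q ^ m - q ^ (m - k)) / e) *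
          (X a.castSucc ^ q - X a.castSucc * X (Fin.last n) ^ (q - 1)) ^ q ^ (m - k - 1)
      = X a.castSucc ^ q ^ m * X (Fin.last n) ^ e
          - X a.castSucc * X (Fin.last n) ^ (q ^ m + e - 1) :=
  stmt_2_general p r q n m e hp hq F he a
end

section
/- In F_p[x_1,...,x_n], the polynomial f_a^{p^{m-1}} f_b^{p^{m-1}} with f_i = x_i^p − x_i x_n^{p−1} is invariant under the group G generated by the transvections g_k (sending x_k ↦ x_k − x_n and fixing the other variables, for 1 ≤ k ≤ n−1) and the diagonal reflection g_n (sending x_n ↦ ω x_n for a root of unity ω in F_p, fixing other variables), and lies in the ideal (x_1^{p^m},...,x_n^{p^m}). -/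
open MvPolynomial

lemma aux_trans (p n : ℕ) [Fact p.Prime] (k i : Fin n) :
    aeval (R := ZMod p) (fun j : Fin (n + 1) =>
        if j = k.castSucc then X k.castSucc - X (Fin.last n)
        else (X j : MvPolynomial (Fin (n + 1)) (ZMod p)))
      (X i.castSucc ^ p - X i.castSucc * X (Fin.last n) ^ (p - 1))
    = X i.castSucc ^ p - X i.castSucc * X (Fin.last n) ^ (p - 1) := by
  have hlast : (Fin.last n : Fin (n+1)) ≠ k.castSucc := (Fin.castSucc_lt_last k).ne'
  simp only [map_sub, map_pow, map_mul, aeval_X, if_neg hlast]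
  by_cases hik : i = k
  · subst hik
    rw [if_pos rfl, sub_pow_char]
    have h : (X (Fin.last n) : MvPolynomial (Fin (n+1)) (ZMod p)) ^ p
        = X (Fin.last n) ^ (p-1) * X (Fin.last n) := by
      rw [← pow_succ]; congr 1; have := (Fact.out : p.Prime).one_le; omega
    linear_combination -h
  · rw [if_neg (by simpa [Fin.castSucc_inj] using hik)]

lemma aux_refl (p n : ℕ) [Fact p.Prime] (ω : ZMod p) (hω : ω ≠ 0) (i : Fin n) :
    aeval (R := ZMod p) (fun j : Fin (n + 1) =>
        if j = Fin.last n then C ω * X (Fin.last n)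
        else (X j : MvPolynomial (Fin (n + 1)) (ZMod p)))
      (X i.castSucc ^ p - X i.castSucc * X (Fin.last n) ^ (p - 1))
    = X i.castSucc ^ p - X i.castSucc * X (Fin.last n) ^ (p - 1) := by
  have hi : (i.castSucc : Fin (n+1)) ≠ Fin.last n := (Fin.castSucc_lt_last i).ne
  simp only [map_sub, map_pow, map_mul, aeval_X, if_neg hi, if_pos rfl, if_true]
  rw [mul_pow, ← C_pow, ZMod.pow_card_sub_one_eq_one hω, map_one, one_mul]

/-- `f_a^{p^{m-1}} f_b^{p^{m-1}}` is invariant under each transvection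
`g_k : x_k ↦ x_k − x_n` and under the diagonal reflection `g_n : x_n ↦ ω x_n`
(`ω` a root of unity, i.e. a nonzero element of `F_p`), and it lies in the ideal
`(x_1^{p^m},…,x_{n+1}^{p^m})`.  Here the index type is `Fin (n+1)` and the last
variable plays the role of `x_n` in the paper. -/
theorem stmt_4 (p n m : ℕ) [Fact p.Prime] (hm : 1 ≤ m) (a b : Fin n) (hab : a ≤ b)
    (ω : ZMod p) (hω : ω ≠ 0) :
    (∀ k : Fin n,
      aeval (R := ZMod p) (fun i : Fin (n + 1) =>
          if i = k.castSucc then X k.castSucc - X (Fin.last n)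
          else (X i : MvPolynomial (Fin (n + 1)) (ZMod p)))
        ((X a.castSucc ^ p - X a.castSucc * X (Fin.last n) ^ (p - 1)) ^ p ^ (m - 1) *
         (X b.castSucc ^ p - X b.castSucc * X (Fin.last n) ^ (p - 1)) ^ p ^ (m - 1))
      = (X a.castSucc ^ p - X a.castSucc * X (Fin.last n) ^ (p - 1)) ^ p ^ (m - 1) *
        (X b.castSucc ^ p - X b.castSucc * X (Fin.last n) ^ (p - 1)) ^ p ^ (m - 1))
    ∧ (aeval (R := ZMod p) (fun i : Fin (n + 1) =>
          if i = Fin.last n then C ω * X (Fin.last n)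
          else (X i : MvPolynomial (Fin (n + 1)) (ZMod p)))
        ((X a.castSucc ^ p - X a.castSucc * X (Fin.last n) ^ (p - 1)) ^ p ^ (m - 1) *
         (X b.castSucc ^ p - X b.castSucc * X (Fin.last n) ^ (p - 1)) ^ p ^ (m - 1))
      = (X a.castSucc ^ p - X a.castSucc * X (Fin.last n) ^ (p - 1)) ^ p ^ (m - 1) *
        (X b.castSucc ^ p - X b.castSucc * X (Fin.last n) ^ (p - 1)) ^ p ^ (m - 1))
    ∧ (X a.castSucc ^ p - X a.castSucc * X (Fin.last n) ^ (p - 1)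
        : MvPolynomial (Fin (n + 1)) (ZMod p)) ^ p ^ (m - 1) *
      (X b.castSucc ^ p - X b.castSucc * X (Fin.last n) ^ (p - 1)) ^ p ^ (m - 1)
      ∈ Ideal.span (Set.range fun i : Fin (n + 1) =>
          (X i : MvPolynomial (Fin (n + 1)) (ZMod p)) ^ p ^ m) := by
  have hp : p.Prime := Fact.out
  refine ⟨fun k => ?_, ?_, ?_⟩
  · rw [map_mul, map_pow, map_pow, aux_trans, aux_trans]
  · rw [map_mul, map_pow, map_pow, aux_refl p n ω hω, aux_refl p n ω hω]
  · set q := p ^ (m - 1) with hq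
    have hpq : p * q = p ^ m := by
      rw [hq, ← pow_succ']; congr 1; omega
    have key : ∀ i : Fin n,
        ((X i.castSucc ^ p - X i.castSucc * X (Fin.last n) ^ (p - 1)
          : MvPolynomial (Fin (n+1)) (ZMod p))) ^ q
        = X i.castSucc ^ p ^ m - X i.castSucc ^ q * X (Fin.last n) ^ ((p-1)*q) := by
      intro i
      rw [hq, sub_pow_char_pow, ← pow_mul, mul_pow, ← pow_mul, ← hq, hpq]
    rw [key a, key b]
    set I := Ideal.span (Set.range fun i : Fin (n + 1) =>
        (X i : MvPolynomial (Fin (n + 1)) (ZMod p)) ^ p ^ m) with hI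
    have hmem : ∀ i : Fin (n+1),
        (X i : MvPolynomial (Fin (n+1)) (ZMod p)) ^ p ^ m ∈ I :=
      fun i => Ideal.subset_span ⟨i, rfl⟩
    have hEE : (p-1)*q + (p-1)*q = (p-2)*q + p^m := by
      obtain ⟨c, hc⟩ := Nat.exists_eq_add_of_le hp.two_le
      subst hc
      have h1 : 2 + c - 1 = c + 1 := by omega
      have h2 : 2 + c - 2 = c := by omega
      rw [h1, h2, ← hpq]; ring
    have hE : (X (Fin.last n) : MvPolynomial (Fin (n+1)) (ZMod p)) ^ ((p-1)*q)
        * X (Fin.last n) ^ ((p-1)*q)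
        = X (Fin.last n) ^ ((p-2)*q) * X (Fin.last n) ^ (p^m) := by
      rw [← pow_add, ← pow_add, hEE]
    have keyeq :
        ((X a.castSucc : MvPolynomial (Fin (n+1)) (ZMod p)) ^ p ^ m
            - X a.castSucc ^ q * X (Fin.last n) ^ ((p-1)*q)) *
          (X b.castSucc ^ p ^ m - X b.castSucc ^ q * X (Fin.last n) ^ ((p-1)*q))
        = (X b.castSucc ^ p ^ m - X b.castSucc ^ q * X (Fin.last n) ^ ((p-1)*q))
            * X a.castSucc ^ p ^ m
          - (X a.castSucc ^ q * X (Fin.last n) ^ ((p-1)*q)) * X b.castSucc ^ p ^ m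
          + (X a.castSucc ^ q * X b.castSucc ^ q * X (Fin.last n) ^ ((p-2)*q))
            * X (Fin.last n) ^ (p ^ m) := by
      linear_combination (X a.castSucc ^ q * X b.castSucc ^ q
        : MvPolynomial (Fin (n+1)) (ZMod p)) * hE
    rw [keyeq]
    exact add_mem (sub_mem (I.mul_mem_left _ (hmem _)) (I.mul_mem_left _ (hmem _)))
      (I.mul_mem_left _ (hmem _))
end

section
/- Let H be a hyperplane in V = F_q^n and G = GL_n(F_q)_H its pointwise stabilizer. Then the number of G-orbits on (F_{q^m})^n (with the action induced by the embedding F_q ⊂ F_{q^m}) equals q^{m(n-1)} + q^{(m-1)(n-1)}·(q^m − 1)/(q − 1). -/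
/-!
Write the hyperplane as `H = {v | c ⬝ᵥ v = 0}` with `c ≠ 0`. A matrix fixes `H` pointwise iff
it has the form `1 + w cᵀ`, and it is invertible iff `1 + c ⬝ᵥ w ≠ 0`; so `G` has
`q ^ n - q ^ (n - 1)` elements and `g = 1 + w cᵀ` acts on `(F_{q^m})^n` by
`x ↦ x + (c ⬝ᵥ x) w`. Hence `G` fixes every point of the extended hyperplane `c ⬝ᵥ x = 0` and
acts freely off it, and Burnside's lemma counts the orbits.
-/

open Matrix MulAction

theorem MulAction.card_orbits_mul_card_group_of_fixed_or_free {G X : Type*} [Group G]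
    [MulAction G X] [Finite G] [Finite X] (S : Set X) (hfix : ∀ x ∈ S, ∀ g : G, g • x = x)
    (hfree : ∀ x ∉ S, ∀ g : G, g • x = x → g = 1) :
    Nat.card (orbitRel.Quotient G X) * Nat.card G = Nat.card S * Nat.card G + Nat.card ↥Sᶜ := by
  classical
  have := Fintype.ofFinite G
  have := Fintype.ofFinite X
  have hfixedBy (g : G) :
      Nat.card (fixedBy X g) = Nat.card S + if g = 1 then Nat.card ↥Sᶜ else 0 := by
    split_ifs with hg
    · rw [hg, fixedBy_one_eq_univ, Nat.card_univ, Nat.card_coe_set_eq, Nat.card_coe_set_eq,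
        Set.ncard_add_ncard_compl]
    · have : fixedBy X g = S := Set.ext fun x =>
        ⟨fun hx => by_contra fun hxS => hg (hfree x hxS g hx), fun hx => hfix x hx g⟩
      rw [this, add_zero]
  calc Nat.card (orbitRel.Quotient G X) * Nat.card G
      = ∑ g : G, Nat.card (fixedBy X g) := by
        simp only [Nat.card_eq_fintype_card]
        exact (sum_card_fixedBy_eq_card_orbits_mul_card_group G X).symm
    _ = Nat.card S * Nat.card G + Nat.card ↥Sᶜ := by
        simp only [hfixedBy, Finset.sum_add_distrib, Finset.sum_const, Finset.card_univ,
          Finset.sum_ite_eq', Finset.mem_univ, if_true, smul_eq_mul, Nat.card_eq_fintype_card]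
        ring

theorem Subgroup.card_quot_eq_card_orbitRel_quotient {G X : Type*} [Group G] [MulAction G X]
    (S : Subgroup G) {r : X → X → Prop} (hr : ∀ x y, r x y ↔ ∃ g ∈ S, g • x = y) :
    Nat.card (Quot r) = Nat.card (orbitRel.Quotient S X) :=
  Nat.card_congr <| Quot.congrRight fun x y => by
    rw [hr, Setoid.comm', orbitRel_apply, mem_orbit_iff, Subtype.exists]
    simp only [Subgroup.mk_smul, exists_prop]

theorem Nat.eq_of_mul_pow_sub_pow_eq {q m n N : ℕ} (hq : 1 < q) (hm : 1 ≤ m) (hn : 1 ≤ n)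
    (h : N * (q ^ n - q ^ (n - 1)) =
      (q ^ m) ^ (n - 1) * (q ^ n - q ^ (n - 1)) + ((q ^ m) ^ n - (q ^ m) ^ (n - 1))) :
    N = q ^ (m * (n - 1)) + q ^ ((m - 1) * (n - 1)) * ((q ^ m - 1) / (q - 1)) := by
  obtain ⟨m, rfl⟩ := Nat.exists_eq_add_of_le' hm
  obtain ⟨n, rfl⟩ := Nat.exists_eq_add_of_le' hn
  simp only [Nat.add_sub_cancel] at h ⊢
  obtain ⟨d, hd⟩ : q - 1 ∣ q ^ (m + 1) - 1 := by
    simpa using Nat.sub_dvd_pow_sub_pow q 1 (m + 1)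
  have hq1 : 0 < q - 1 := by omega
  rw [hd, Nat.mul_div_cancel_left d hq1]
  have hgap (a k : ℕ) : a ^ (k + 1) - a ^ k = a ^ k * (a - 1) := by
    rw [Nat.mul_sub, mul_one, pow_succ]
  rw [hgap, hgap, hd] at h
  refine Nat.eq_of_mul_eq_mul_right (Nat.mul_pos (Nat.pow_pos (by omega)) hq1) (h.trans ?_)
  ring

section VecMulVec

variable {ι R : Type*} [DecidableEq ι] [CommRing R]

theorem Matrix.map_one_add_vecMulVec {S : Type*} [CommRing S] (f : R →+* S) (w c : ι → R) :
    (1 + vecMulVec w c).map f = 1 + vecMulVec (f ∘ w) (f ∘ c) := by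
  ext i j
  simp [Matrix.one_apply, vecMulVec_apply, apply_ite f]

variable [Fintype ι]

theorem Matrix.one_add_vecMulVec_mulVec (w c v : ι → R) :
    (1 + vecMulVec w c) *ᵥ v = v + (c ⬝ᵥ v) • w := by
  rw [add_mulVec, one_mulVec, vecMulVec_mulVec, op_smul_eq_smul]

theorem Matrix.det_one_add_vecMulVec (w c : ι → R) : (1 + vecMulVec w c).det = 1 + c ⬝ᵥ w := by
  rw [vecMulVec_eq Unit, det_one_add_replicateCol_mul_replicateRow]

end VecMulVec

theorem Matrix.vecMulVec_left_injective {ι κ K : Type*} [MonoidWithZero K]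
    [IsRightCancelMulZero K] {c : ι → K} (hc : c ≠ 0) :
    Function.Injective fun w : κ → K => vecMulVec w c := by
  obtain ⟨j, hj⟩ : ∃ j, c j ≠ 0 := Function.ne_iff.mp hc
  intro w w' h
  funext i
  simpa [vecMulVec_apply, hj] using congrFun (congrFun h i) j

theorem Matrix.exists_eq_vecMulVec_of_mulVec_eq_zero {ι κ K : Type*} [Fintype ι] [DecidableEq ι]
    [Field K] {c : ι → K} (hc : c ≠ 0) {A : Matrix κ ι K}
    (hA : ∀ v, c ⬝ᵥ v = 0 → A *ᵥ v = 0) : ∃ w, A = vecMulVec w c := by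
  obtain ⟨j₀, hj₀⟩ : ∃ j, c j ≠ 0 := Function.ne_iff.mp hc
  refine ⟨(c j₀)⁻¹ • A.col j₀, ?_⟩
  ext i j
  -- `c j₀ eⱼ - c j e_{j₀}` lies in the hyperplane, so column `j` is `c j / c j₀` times column `j₀`.
  have hcol := congrFun (hA (c j₀ • Pi.single j 1 - c j • Pi.single j₀ 1) (by
    simp only [dotProduct_sub, dotProduct_smul, dotProduct_single, smul_eq_mul, mul_one]
    ring)) i
  simp only [mulVec_sub, mulVec_smul, mulVec_single_one, Pi.sub_apply, Pi.smul_apply, col_apply,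
    smul_eq_mul, Pi.zero_apply] at hcol
  simp only [vecMulVec_apply, Pi.smul_apply, col_apply, smul_eq_mul]
  field_simp
  linear_combination hcol

theorem Submodule.exists_dual_ker_eq_of_finrank_add_one_eq {K V : Type*} [Field K]
    [AddCommGroup V] [Module K V] [FiniteDimensional K V] (H : Submodule K V)
    (hH : Module.finrank K H + 1 = Module.finrank K V) :
    ∃ f : Module.Dual K V, f ≠ 0 ∧ LinearMap.ker f = H := by
  have hquot : Module.finrank K (V ⧸ H) = Module.finrank K K := by
    have := H.finrank_quotient_add_finrank
    rw [Module.finrank_self]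
    omega
  obtain ⟨e⟩ := FiniteDimensional.nonempty_linearEquiv_of_finrank_eq hquot
  have hker : LinearMap.ker (e.toLinearMap ∘ₗ H.mkQ) = H := by
    rw [LinearEquiv.ker_comp, ker_mkQ]
  refine ⟨e.toLinearMap ∘ₗ H.mkQ, fun h => ?_, hker⟩
  rw [h, LinearMap.ker_zero] at hker
  rw [← hker, finrank_top] at hH
  omega

theorem Submodule.exists_coe_eq_setOf_dotProduct_eq_zero {ι K : Type*} [Fintype ι]
    [DecidableEq ι] [Field K] (H : Submodule K (ι → K))
    (hH : Module.finrank K H + 1 = Fintype.card ι) :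
    ∃ c : ι → K, c ≠ 0 ∧ (H : Set (ι → K)) = {v | c ⬝ᵥ v = 0} := by
  rw [← Module.finrank_fintype_fun_eq_card K] at hH
  obtain ⟨f, hf, hker⟩ := H.exists_dual_ker_eq_of_finrank_add_one_eq hH
  obtain ⟨c, rfl⟩ := (dotProductEquiv K ι).surjective f
  refine ⟨c, by simpa using hf, ?_⟩
  rw [← hker]
  ext v
  simp

section Card

variable {ι K : Type*} [Fintype ι] [Field K] [Fintype K] {c : ι → K}

theorem card_dotProduct_eq (hc : c ≠ 0) (t : K) :
    Nat.card {v : ι → K | c ⬝ᵥ v = t} = Fintype.card K ^ (Fintype.card ι - 1) := by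
  classical
  let f := dotProductEquiv K ι c
  have hf : f ≠ 0 := by simpa [f] using hc
  obtain ⟨v₀, hv₀⟩ := LinearMap.surjective hf t
  have htrans : {v : ι → K | c ⬝ᵥ v = t} ≃ LinearMap.ker f :=
    (Equiv.subRight v₀).subtypeEquiv fun v => by simp [f, dotProduct_sub, ← hv₀, sub_eq_zero]
  rw [Nat.card_congr htrans, Nat.card_eq_fintype_card, Module.card_eq_pow_finrank (K := K)]
  have := f.finrank_ker_add_one_of_ne_zero hf
  rw [Module.finrank_fintype_fun_eq_card] at this
  rw [← this, Nat.add_sub_cancel]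

theorem card_compl_dotProduct_eq (hc : c ≠ 0) (t : K) :
    Nat.card ↥{v : ι → K | c ⬝ᵥ v = t}ᶜ =
      Fintype.card K ^ Fintype.card ι - Fintype.card K ^ (Fintype.card ι - 1) := by
  classical
  rw [Nat.card_coe_set_eq, Set.ncard_compl, ← Nat.card_coe_set_eq, card_dotProduct_eq hc,
    Nat.card_eq_fintype_card, Fintype.card_fun]

end Card

section Stabilizer

variable {ι K : Type*} [Fintype ι] [DecidableEq ι] [Field K] {c : ι → K}

theorem Matrix.GeneralLinearGroup.mem_fixingSubgroup_iff (hc : c ≠ 0) {g : GL ι K} :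
    g ∈ fixingSubgroup (GL ι K) {v | c ⬝ᵥ v = 0} ↔
      ∃ w, (g : Matrix ι ι K) = 1 + vecMulVec w c := by
  rw [_root_.mem_fixingSubgroup_iff]
  constructor
  · intro hg
    obtain ⟨w, hw⟩ := exists_eq_vecMulVec_of_mulVec_eq_zero hc (A := (g : Matrix ι ι K) - 1)
      fun v hv => by rw [sub_mulVec, one_mulVec, sub_eq_zero]; exact hg v hv
    exact ⟨w, eq_add_of_sub_eq' hw⟩
  · rintro ⟨w, hw⟩ v (hv : c ⬝ᵥ v = 0)
    change (g : Matrix ι ι K) *ᵥ v = v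
    rw [hw, one_add_vecMulVec_mulVec, hv, zero_smul, add_zero]

theorem Matrix.GeneralLinearGroup.card_fixingSubgroup [Fintype K] (hc : c ≠ 0) :
    Nat.card (fixingSubgroup (GL ι K) {v | c ⬝ᵥ v = 0}) =
      Fintype.card K ^ Fintype.card ι - Fintype.card K ^ (Fintype.card ι - 1) := by
  have hdet (w : ι → K) (hw : w ∈ {w | c ⬝ᵥ w = -1}ᶜ) : (1 + vecMulVec w c).det ≠ 0 := by
    rw [det_one_add_vecMulVec, add_comm, ← sub_neg_eq_add, sub_ne_zero]
    exact hw
  let param : ↥{w | c ⬝ᵥ w = -1}ᶜ → fixingSubgroup (GL ι K) {v | c ⬝ᵥ v = 0} := fun w =>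
    ⟨mkOfDetNeZero _ (hdet w w.2), (mem_fixingSubgroup_iff hc).2 ⟨w, rfl⟩⟩
  have hparam : Function.Bijective param := by
    refine ⟨fun w w' h => Subtype.ext (vecMulVec_left_injective hc ?_), fun g => ?_⟩
    · simpa [param] using congrArg (fun g => ((g.1 : GL ι K) : Matrix ι ι K)) h
    · obtain ⟨w, hw⟩ := (mem_fixingSubgroup_iff hc).1 g.2
      have hw' : w ∈ {w | c ⬝ᵥ w = -1}ᶜ := fun h => by
        have := (Matrix.isUnit_iff_isUnit_det _).1 (g : GL ι K).isUnit
        rw [hw, det_one_add_vecMulVec, h, add_neg_cancel] at this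
        exact not_isUnit_zero this
      exact ⟨⟨w, hw'⟩, Subtype.ext (Units.ext hw.symm)⟩
  rw [← Nat.card_congr (Equiv.ofBijective param hparam), card_compl_dotProduct_eq hc]

end Stabilizer

section BaseChange

variable {ι F E : Type*} [Fintype ι] [DecidableEq ι]

section CommRing

variable [CommRing F] [CommRing E] [Algebra F E]

/-- Not an instance: for `E = F` it would be a second action of `GL ι F` on `ι → F`. -/
abbrev Matrix.GeneralLinearGroup.baseChangeMulAction : MulAction (GL ι F) (ι → E) :=
  MulAction.compHom (ι → E) (Matrix.GeneralLinearGroup.map (algebraMap F E))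

attribute [local instance] Matrix.GeneralLinearGroup.baseChangeMulAction

theorem Matrix.GeneralLinearGroup.baseChange_smul_def (g : GL ι F) (x : ι → E) :
    g • x = (g : Matrix ι ι F).map (algebraMap F E) *ᵥ x :=
  rfl

theorem Matrix.GeneralLinearGroup.baseChange_smul_of_coe_eq {g : GL ι F} {w c : ι → F}
    (hg : (g : Matrix ι ι F) = 1 + vecMulVec w c) (x : ι → E) :
    g • x = x + ((algebraMap F E ∘ c) ⬝ᵥ x) • (algebraMap F E ∘ w) := by
  rw [baseChange_smul_def, hg, map_one_add_vecMulVec, one_add_vecMulVec_mulVec]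

end CommRing

attribute [local instance] Matrix.GeneralLinearGroup.baseChangeMulAction

variable [Field F] [Field E] [Algebra F E] {c : ι → F} {g : GL ι F}

theorem Matrix.GeneralLinearGroup.smul_eq_self_of_mem_fixingSubgroup (hc : c ≠ 0)
    (hg : g ∈ fixingSubgroup (GL ι F) {v | c ⬝ᵥ v = 0}) {x : ι → E}
    (hx : (algebraMap F E ∘ c) ⬝ᵥ x = 0) : g • x = x := by
  obtain ⟨w, hw⟩ := (mem_fixingSubgroup_iff hc).1 hg
  rw [baseChange_smul_of_coe_eq hw, hx, zero_smul, add_zero]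

theorem Matrix.GeneralLinearGroup.eq_one_of_mem_fixingSubgroup_of_smul_eq_self (hc : c ≠ 0)
    (hg : g ∈ fixingSubgroup (GL ι F) {v | c ⬝ᵥ v = 0}) {x : ι → E}
    (hx : (algebraMap F E ∘ c) ⬝ᵥ x ≠ 0) (hgx : g • x = x) : g = 1 := by
  obtain ⟨w, hw⟩ := (mem_fixingSubgroup_iff hc).1 hg
  rw [baseChange_smul_of_coe_eq hw, add_eq_left, smul_eq_zero, or_iff_right hx] at hgx
  have hw0 : w = 0 := funext fun i => (algebraMap F E).injective (by simpa using congrFun hgx i)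
  exact Units.ext (by rw [hw, hw0, zero_vecMulVec, add_zero, Units.val_one])

end BaseChange

/-- For a hyperplane `H` in `F_q^n` and `G = GL_n(F_q)_H` its pointwise stabilizer, the
number of `G`-orbits on `(F_{q^m})^n` (action induced by the embedding `F_q ⊆ F_{q^m}`)
is `q^{m(n−1)} + q^{(m−1)(n−1)}·(q^m − 1)/(q − 1)`. -/
theorem stmt_6 (q n m : ℕ) (F E : Type) [Field F] [Fintype F] [Field E] [Fintype E]
    [Algebra F E] (hq : Fintype.card F = q) (hE : Fintype.card E = q ^ m)
    (hm : 1 ≤ m) (hn : 1 ≤ n)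
    (H : Submodule F (Fin n → F)) (hH : Module.finrank F H = n - 1) :
    Nat.card (Quot fun x y : Fin n → E =>
      ∃ g : GL (Fin n) F,
        (∀ v ∈ H, Matrix.mulVec (g : Matrix (Fin n) (Fin n) F) v = v) ∧
        Matrix.mulVec (((g : Matrix (Fin n) (Fin n) F)).map (algebraMap F E)) x = y)
      = q ^ (m * (n - 1)) + q ^ ((m - 1) * (n - 1)) * ((q ^ m - 1) / (q - 1)) := by
  obtain ⟨c, hc, hHc⟩ := H.exists_coe_eq_setOf_dotProduct_eq_zero
    (by rw [hH, Fintype.card_fin]; omega)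
  let := GeneralLinearGroup.baseChangeMulAction (ι := Fin n) (F := F) (E := E)
  let G := fixingSubgroup (GL (Fin n) F) {v | c ⬝ᵥ v = 0}
  rw [Subgroup.card_quot_eq_card_orbitRel_quotient G fun x y => exists_congr fun g =>
    and_congr (by rw [mem_fixingSubgroup_iff, ← hHc]; rfl)
      (by rw [GeneralLinearGroup.baseChange_smul_def])]
  have hcE : algebraMap F E ∘ c ≠ 0 := fun h =>
    hc (funext fun i => by simpa using congrFun h i)
  have hcount := card_orbits_mul_card_group_of_fixed_or_free (G := G)
    {x : Fin n → E | (algebraMap F E ∘ c) ⬝ᵥ x = 0}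
    (fun _ hx g => GeneralLinearGroup.smul_eq_self_of_mem_fixingSubgroup hc g.2 hx)
    (fun _ hx g hgx => Subtype.ext
      (GeneralLinearGroup.eq_one_of_mem_fixingSubgroup_of_smul_eq_self hc g.2 hx hgx))
  rw [GeneralLinearGroup.card_fixingSubgroup hc, card_dotProduct_eq hcE,
    card_compl_dotProduct_eq hcE, Fintype.card_fin, hq, hE] at hcount
  exact Nat.eq_of_mul_pow_sub_pow_eq (hq ▸ Fintype.one_lt_card) hm hn hcount
end

section
/- Let H be a hyperplane in V = F_q^n defined by a linear form x_n, let H' be the corresponding hyperplane in (F_{q^m})^n, and let G = GL_n(F_q)_H. Then every G-orbit on the complement of H' in (F_{q^m})^n has exactly q^{n-1}(q − 1) elements. -/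
open Matrix

variable {n : ℕ} {F : Type} [Field F]

lemma linform_sum (l : (Fin n → F) →ₗ[F] F) (v : Fin n → F) :
    l v = ∑ i, l (Pi.single i 1) * v i := by
  conv_lhs => rw [← Finset.univ_sum_single v, map_sum]
  refine Finset.sum_congr rfl fun i _ => ?_
  have : Pi.single i (v i) = v i • (Pi.single i 1 : Fin n → F) := by
    ext j; by_cases h : j = i <;> simp [Pi.single_apply, h]
  rw [this, LinearMap.map_smul, smul_eq_mul, mul_comm]

/-- the matrix `1 + α ⊗ l` -/
def matM (l : (Fin n → F) →ₗ[F] F) (α : Fin n → F) : Matrix (Fin n) (Fin n) F :=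
  1 + Matrix.replicateCol Unit α * Matrix.replicateRow Unit (fun i => l (Pi.single i 1))

lemma matM_apply (l : (Fin n → F) →ₗ[F] F) (α : Fin n → F) (j k : Fin n) :
    matM l α j k = (1 : Matrix (Fin n) (Fin n) F) j k + α j * l (Pi.single k 1) := by
  simp [matM, Matrix.mul_apply]

lemma matM_mulVec (l : (Fin n → F) →ₗ[F] F) (α : Fin n → F) (v : Fin n → F) :
    (matM l α).mulVec v = v + (l v) • α := by
  ext j
  simp only [matM, Matrix.add_mulVec, Matrix.one_mulVec, Pi.add_apply, ← Matrix.mulVec_mulVec]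
  congr 1
  simp [Matrix.mulVec, dotProduct, linform_sum l v, Finset.mul_sum, mul_comm,
    mul_left_comm, smul_eq_mul]

lemma matM_det (l : (Fin n → F) →ₗ[F] F) (α : Fin n → F) :
    (matM l α).det = 1 + l α := by
  rw [matM, Matrix.det_one_add_replicateCol_mul_replicateRow, linform_sum l α]
  simp [dotProduct]

variable {E : Type} [Field E] [Algebra F E]

lemma matM_map_mulVec (l : (Fin n → F) →ₗ[F] F) (α : Fin n → F) (x : Fin n → E) (j : Fin n) :
    ((matM l α).map (algebraMap F E)).mulVec x j
      = x j + algebraMap F E (α j) * ∑ i, algebraMap F E (l (Pi.single i 1)) * x i := by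
  simp only [Matrix.mulVec, dotProduct, Matrix.map_apply, matM_apply, map_add,
    _root_.map_mul, add_mul, Finset.sum_add_distrib]
  congr 1
  · simp [Matrix.one_apply, apply_ite (algebraMap F E)]
  · rw [Finset.mul_sum]; exact Finset.sum_congr rfl fun i _ => by ring

lemma count_lemma (q : ℕ) [Fintype F] (hq : Fintype.card F = q) (hn : 1 ≤ n)
    (l : (Fin n → F) →ₗ[F] F) (hl : l ≠ 0) :
    Nat.card {α : Fin n → F // 1 + l α ≠ 0} = q ^ (n - 1) * (q - 1) := by
  classical
  obtain ⟨u, hu⟩ : ∃ u, l u ≠ 0 := by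
    by_contra h; push_neg at h; exact hl (LinearMap.ext fun v => by simp [h])
  set v0 : Fin n → F := (l u)⁻¹ • u with hv0def
  have hv0 : l v0 = 1 := by
    rw [hv0def, LinearMap.map_smul, smul_eq_mul, inv_mul_cancel₀ hu]
  -- full split equiv
  have e1 : (Fin n → F) ≃ F × LinearMap.ker l :=
    { toFun := fun α => (l α, ⟨α - l α • v0, by simp [LinearMap.mem_ker, hv0]⟩)
      invFun := fun p => p.2.1 + p.1 • v0
      left_inv := fun α => by simp
      right_inv := fun p => by
        have hk : l p.2.1 = 0 := p.2.2
        ext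
        · simp [hk, hv0]
        · simp [hk, hv0] }
  have e2 : {α : Fin n → F // 1 + l α ≠ 0} ≃ {c : F // 1 + c ≠ 0} × LinearMap.ker l :=
    { toFun := fun a => (⟨l a.1, a.2⟩, ⟨a.1 - l a.1 • v0, by simp [LinearMap.mem_ker, hv0]⟩)
      invFun := fun p => ⟨p.2.1 + p.1.1 • v0, by
        have hk : l p.2.1 = 0 := p.2.2
        simpa [hk, hv0] using p.1.2⟩
      left_inv := fun a => by ext; simp
      right_inv := fun p => by
        have hk : l p.2.1 = 0 := p.2.2
        ext
        · simp [hk, hv0]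
        · simp [hk, hv0] }
  have hK : q * Nat.card (LinearMap.ker l) = q ^ n := by
    have := Nat.card_congr e1
    rw [Nat.card_prod] at this
    simpa [Nat.card_eq_fintype_card, hq] using this.symm
  have hqpos : 0 < q := hq ▸ Fintype.card_pos
  have hKval : Nat.card (LinearMap.ker l) = q ^ (n - 1) := by
    have : q * Nat.card (LinearMap.ker l) = q * q ^ (n - 1) := by
      rw [hK, ← pow_succ']
      congr 1
      omega
    exact Nat.eq_of_mul_eq_mul_left hqpos this
  have hC : Nat.card {c : F // 1 + c ≠ 0} = q - 1 := by
    have e3 : {c : F // 1 + c ≠ 0} ≃ {c : F // ¬ (c = -1)} :=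
      Equiv.subtypeEquivRight fun c => by
        constructor
        · intro h h'; exact h (by rw [h']; ring)
        · intro h h'; exact h (by linear_combination h')
    rw [Nat.card_congr e3, Nat.card_eq_fintype_card, Fintype.card_subtype_compl,
      Fintype.card_subtype_eq, hq]
  rw [Nat.card_congr e2, Nat.card_prod, hC, hKval, mul_comm]

/-- Let `H = ker l` be a hyperplane in `F_q^n` (given by a nonzero linear form `l`),
`H'` the corresponding hyperplane in `(F_{q^m})^n`, and `G = GL_n(F_q)_H` the pointwise
stabilizer.  Every `G`-orbit on the complement of `H'` has exactly `q^{n−1}(q−1)`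
elements. -/
theorem stmt_7 (q n m : ℕ) (F E : Type) [Field F] [Fintype F] [Field E] [Fintype E]
    [Algebra F E] (hq : Fintype.card F = q) (hE : Fintype.card E = q ^ m)
    (hm : 1 ≤ m) (hn : 1 ≤ n)
    (l : (Fin n → F) →ₗ[F] F) (hl : l ≠ 0)
    (x : Fin n → E)
    (hx : ∑ i, algebraMap F E (l (Pi.single i 1)) * x i ≠ 0) :
    Nat.card {y : Fin n → E |
      ∃ g : GL (Fin n) F,
        (∀ v, l v = 0 → Matrix.mulVec (g : Matrix (Fin n) (Fin n) F) v = v) ∧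
        Matrix.mulVec (((g : Matrix (Fin n) (Fin n) F)).map (algebraMap F E)) x = y}
      = q ^ (n - 1) * (q - 1) := by
  classical
  set lam : E := ∑ i, algebraMap F E (l (Pi.single i 1)) * x i with hlam
  -- v0 with l v0 = 1
  obtain ⟨u, hu⟩ : ∃ u, l u ≠ 0 := by
    by_contra h; push_neg at h; exact hl (LinearMap.ext fun v => by simp [h])
  set v0 : Fin n → F := (l u)⁻¹ • u with hv0def
  have hv0 : l v0 = 1 := by
    rw [hv0def, LinearMap.map_smul, smul_eq_mul, inv_mul_cancel₀ hu]
  set φ : (Fin n → F) → (Fin n → E) := fun α => fun j => x j + algebraMap F E (α j) * lam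
    with hφ
  set T : Set (Fin n → F) := {α | 1 + l α ≠ 0} with hT
  have hset : {y : Fin n → E |
      ∃ g : GL (Fin n) F,
        (∀ v, l v = 0 → Matrix.mulVec (g : Matrix (Fin n) (Fin n) F) v = v) ∧
        Matrix.mulVec (((g : Matrix (Fin n) (Fin n) F)).map (algebraMap F E)) x = y}
      = φ '' T := by
    ext y
    constructor
    · rintro ⟨g, hg, rfl⟩
      set M : Matrix (Fin n) (Fin n) F := (g : Matrix (Fin n) (Fin n) F) with hM
      set α : Fin n → F := M.mulVec v0 - v0 with hα
      have key : ∀ v, M.mulVec v = v + l v • α := by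
        intro v
        have hv : l (v - l v • v0) = 0 := by simp [hv0]
        have h1 := hg _ hv
        rw [Matrix.mulVec_sub, Matrix.mulVec_smul] at h1
        have : M.mulVec v = v - l v • v0 + l v • M.mulVec v0 := by
          rw [← h1]; abel
        rw [this, hα]
        ext j; simp; ring
      have hMinj : Function.Injective M.mulVec :=
        Matrix.mulVec_injective_iff_isUnit.mpr (Units.isUnit g)
      have hTα : 1 + l α ≠ 0 := by
        intro hcon
        have h2 : l (M.mulVec v0) = 0 := by
          have : l α = l (M.mulVec v0) - 1 := by rw [hα]; simp [hv0]
          rw [this] at hcon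
          linear_combination hcon
        have h3 := hg _ h2
        have h4 : M.mulVec v0 = v0 := hMinj h3
        rw [h4, hv0] at h2
        exact one_ne_zero h2
      have hMeq : M = matM l α := by
        ext j k
        have := congrFun (key (Pi.single k 1)) j
        rw [Matrix.mulVec_single] at this
        simpa [matM_apply, Matrix.one_apply, Pi.single_apply, mul_comm, eq_comm] using this
      refine ⟨α, hTα, ?_⟩
      funext j
      show x j + algebraMap F E (α j) * lam = (M.map (algebraMap F E)).mulVec x j
      rw [hMeq, matM_map_mulVec]
    · rintro ⟨α, hTα, rfl⟩
      have hdet : IsUnit (matM l α).det := by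
        rw [matM_det]; exact Ne.isUnit hTα
      have hMu : IsUnit (matM l α) := (Matrix.isUnit_iff_isUnit_det _).mpr hdet
      refine ⟨hMu.unit, ?_, ?_⟩
      · intro v hv
        rw [hMu.unit_spec, matM_mulVec, hv]
        simp
      · funext j
        rw [hMu.unit_spec, matM_map_mulVec]
  rw [hset]
  have hφinj : Function.Injective φ := by
    intro a b hab
    funext j
    have h1 : algebraMap F E (a j) * lam = algebraMap F E (b j) * lam := by
      have := congrFun hab j
      simp only [hφ] at this
      exact add_left_cancel this
    exact (algebraMap F E).injective (mul_right_cancel₀ hx h1)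
  rw [Nat.card_image_of_injective hφinj]
  have : Nat.card T = Nat.card {α : Fin n → F // 1 + l α ≠ 0} := rfl
  rw [this, count_lemma q hq hn l hl]
end

section
/- Let p be a prime and S^G = F_p[f_1, f_2] a polynomial ring in two variables with deg f_1 = p, deg f_2 = e. For h_0 = f_2^{1+e^{-1}(p^m−1)}, h_1 = Σ_{k=0}^{m−1} f_2^{1+e^{-1}(p^m−p^{m−k})} f_1^{p^{m−k−1}}, h_2 = f_1^{2p^{m−1}}, the syzygy module of (h_0, h_1, h_2) over S^G is free of rank 2; consequently the ideal I = (h_0, h_1, h_2) has graded free resolution 0 → S^G[−(2p^m+e)] ⊕ S^G[−(2p^m+e−1)] → S^G[−(p^m+e−1)] ⊕ S^G[−(p^m+e)] ⊕ S^G[−2p^m] → I → 0. -/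
/-!
Write `x = f₁`, `y = f₂`, `q = p^(m-1)`, `N = (p^m - 1)/e`, `c = (p^m - q)/e`. Then
`h₀ = y · y^N`, `h₁ = y · g` and `h₂ = x^(2q)`, where `g = x^q + y^c s` and `s` is the
analogous sum for `m - 1`. The identity
`y^(2c-N) s² · y^N + (x^q - y^c s) · g = x^(2q)` is a Bézout relation `A a + B g = u`
for `a = y^N`, `u = x^(2q)`, with `y` prime to `u` and `a` prime to `g`. In that situation
the syzygies of `(y a, y g, u)` are freely generated by `(A, B, -y)` and `(g, -a, 0)`: the
last entry of a syzygy is divisible by `y`; cancelling `y` and subtracting a multiple of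
`(A, B, -y)` leaves a syzygy of `(a, g)`, which is a multiple of `(g, -a)`.
-/

open MvPolynomial

theorem Nat.dvd_pow_sub_pow_of_dvd_sub_one_s15 {p e : ℕ} (he : e ∣ p - 1) {a b : ℕ}
    (hba : b ≤ a) :
    e ∣ p ^ a - p ^ b := by
  have hpow : p ^ a - p ^ b = p ^ b * (p ^ (a - b) - 1 ^ (a - b)) := by
    rw [one_pow, Nat.mul_sub_one, ← pow_add, Nat.add_sub_cancel' hba]
  rw [hpow]
  exact Dvd.dvd.mul_left (he.trans (Nat.sub_dvd_pow_sub_pow p 1 _)) _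

theorem Nat.one_le_pow_succ_sub_pow_div {p e : ℕ} (hp : 1 < p) (he : e ∣ p - 1) (m : ℕ) :
    1 ≤ (p ^ (m + 1) - p ^ m) / e := by
  have he0 : 0 < e := Nat.pos_of_dvd_of_pos he (by omega)
  refine Nat.div_pos ?_ he0
  have hpm : p ^ m * (p - 1) = p ^ (m + 1) - p ^ m := by rw [Nat.mul_sub_one, pow_succ]
  have := Nat.le_of_dvd (by omega) he
  nlinarith [Nat.one_le_pow m p (by omega)]

theorem Nat.pow_succ_sub_one_div_le {p e : ℕ} (hp : 1 < p) (he : e ∣ p - 1) (m : ℕ) :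
    (p ^ (m + 1) - 1) / e ≤ 2 * ((p ^ (m + 1) - p ^ m) / e) := by
  rw [← Nat.mul_div_assoc 2 (Nat.dvd_pow_sub_pow_of_dvd_sub_one_s15 he (by omega))]
  apply Nat.div_le_div_right
  have : 2 * p ^ m ≤ p ^ (m + 1) := by rw [pow_succ]; nlinarith [Nat.one_le_pow m p (by omega)]
  omega

theorem Fintype.range_linearCombination_fin_three {R M : Type*} [Semiring R] [AddCommMonoid M]
    [Module R M] (v : Fin 3 → M) :
    LinearMap.range (Fintype.linearCombination R v) = Submodule.span R {v 0, v 1, v 2} := by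
  rw [Fintype.range_linearCombination]
  congr 1
  ext
  simp only [Set.mem_range, Fin.exists_fin_succ, Fin.exists_fin_zero, Set.mem_insert_iff,
    Set.mem_singleton_iff]
  tauto

section Syzygy

variable {R : Type*} [CommRing R]

theorem Fintype.linearCombination_fin_three_apply (v f : Fin 3 → R) :
    Fintype.linearCombination R v f = f 0 * v 0 + f 1 * v 1 + f 2 * v 2 := by
  simp [Fintype.linearCombination_apply, Fin.sum_univ_three]

variable [IsDomain R] [DecompositionMonoid R] {y a g u A B : R}

theorem exists_eq_smul_add_smul_of_linearCombination_eq_zero (hy : y ≠ 0) (ha : a ≠ 0)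
    (hyu : IsRelPrime y u) (hag : IsRelPrime a g) (hu : A * a + B * g = u) {w : Fin 3 → R}
    (hw : w 0 * (y * a) + w 1 * (y * g) + w 2 * u = 0) :
    ∃ c t : R, w = c • ![A, B, -y] + t • ![g, -a, 0] := by
  obtain ⟨c, hc⟩ : y ∣ w 2 :=
    hyu.dvd_of_dvd_mul_right ⟨-(w 0 * a + w 1 * g), by linear_combination hw⟩
  have hc' : w 0 * a + w 1 * g + c * u = 0 :=
    mul_left_cancel₀ hy (by linear_combination hw - u * hc)
  obtain ⟨t, ht⟩ : a ∣ w 1 + c * B :=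
    hag.dvd_of_dvd_mul_right ⟨-(w 0 + c * A), by linear_combination hc' + c * hu⟩
  have ht' : w 0 + c * A + t * g = 0 :=
    mul_left_cancel₀ ha (by linear_combination hc' + c * hu - g * ht)
  refine ⟨-c, -t, funext fun i => ?_⟩
  fin_cases i <;> simp
  · linear_combination ht'
  · linear_combination ht
  · linear_combination hc

theorem exists_basis_ker_linearCombination (hy : y ≠ 0) (ha : a ≠ 0)
    (hyu : IsRelPrime y u) (hag : IsRelPrime a g) (hu : A * a + B * g = u) :
    ∃ b : Module.Basis (Fin 2) R
        (LinearMap.ker (Fintype.linearCombination R ![y * a, y * g, u])),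
      ∀ j, (b j : Fin 3 → R) = ![![A, B, -y], ![g, -a, 0]] j := by
  let V : Fin 2 → LinearMap.ker (Fintype.linearCombination R ![y * a, y * g, u]) := fun j =>
    ⟨![![A, B, -y], ![g, -a, 0]] j, by
      fin_cases j <;>
        simp only [LinearMap.mem_ker, Fintype.linearCombination_fin_three_apply] <;> simp
      · linear_combination y * hu
      · ring⟩
  have hli : LinearIndependent R V := by
    rw [Fintype.linearIndependent_iff]
    intro f hf
    have hf := congrArg Subtype.val hf
    have h1 := congrFun hf 1
    have h2 := congrFun hf 2
    simp [V, Fin.sum_univ_two] at h1 h2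
    have hf0 : f 0 = 0 := h2.resolve_right hy
    intro i
    fin_cases i
    · exact hf0
    · simpa [hf0, ha] using h1
  have hspan : ⊤ ≤ Submodule.span R (Set.range V) := by
    rintro ⟨w, hw⟩ -
    have hw' := LinearMap.mem_ker.mp hw
    rw [Fintype.linearCombination_fin_three_apply] at hw'
    obtain ⟨c, t, rfl⟩ :=
      exists_eq_smul_add_smul_of_linearCombination_eq_zero hy ha hyu hag hu (by simpa using hw')
    have hV : (⟨_, hw⟩ : LinearMap.ker _) = c • V 0 + t • V 1 := rfl
    rw [hV]
    exact add_mem (Submodule.smul_mem _ c (Submodule.subset_span (Set.mem_range_self 0)))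
      (Submodule.smul_mem _ t (Submodule.subset_span (Set.mem_range_self 1)))
  exact ⟨Module.Basis.mk hli hspan, fun j => by simp [V]⟩

end Syzygy

section LacunarySum

variable (R : Type*) [CommSemiring R] {p e : ℕ}

noncomputable def lacunarySum (p e m : ℕ) : MvPolynomial (Fin 2) R :=
  ∑ k ∈ Finset.range m, X 1 ^ ((p ^ m - p ^ (m - k)) / e) * X 0 ^ p ^ (m - k - 1)

theorem lacunarySum_succ (hp : 0 < p) (he : e ∣ p - 1) (m : ℕ) :
    lacunarySum R p e (m + 1) =
      X 0 ^ p ^ m + X 1 ^ ((p ^ (m + 1) - p ^ m) / e) * lacunarySum R p e m := by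
  rw [lacunarySum, Finset.sum_range_succ', lacunarySum, Finset.mul_sum, add_comm]
  congr 1
  · simp
  refine Finset.sum_congr rfl fun k hk => ?_
  have hk : k < m := Finset.mem_range.mp hk
  have hle₁ : p ^ (m - k) ≤ p ^ m := Nat.pow_le_pow_right hp (by omega)
  have hle₂ : p ^ m ≤ p ^ (m + 1) := Nat.pow_le_pow_right hp (by omega)
  have hexp : (p ^ (m + 1) - p ^ (m + 1 - (k + 1))) / e =
      (p ^ (m + 1) - p ^ m) / e + (p ^ m - p ^ (m - k)) / e := by
    rw [← Nat.add_div_of_dvd_right (Nat.dvd_pow_sub_pow_of_dvd_sub_one_s15 he (by omega))]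
    congr 1
    rw [show m + 1 - (k + 1) = m - k by omega]
    omega
  rw [hexp, pow_add, show m + 1 - (k + 1) - 1 = m - k - 1 by omega, mul_assoc]

theorem isWeightedHomogeneous_lacunarySum (hp : 0 < p) (he : e ∣ p - 1) (m : ℕ) :
    IsWeightedHomogeneous ![p, e] (lacunarySum R p e m) (p ^ m) := by
  induction m with
  | zero => simpa [lacunarySum] using isWeightedHomogeneous_zero R ![p, e] 1
  | succ m ih =>
    rw [lacunarySum_succ R hp he]
    have hX₀ := (isWeightedHomogeneous_X R ![p, e] 0).pow (p ^ m)
    have hX₁ := (isWeightedHomogeneous_X R ![p, e] 1).pow ((p ^ (m + 1) - p ^ m) / e)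
    have hdeg : (p ^ (m + 1) - p ^ m) / e * e + p ^ m = p ^ (m + 1) := by
      rw [Nat.div_mul_cancel (Nat.dvd_pow_sub_pow_of_dvd_sub_one_s15 he (by omega)),
        Nat.sub_add_cancel (Nat.pow_le_pow_right hp (by omega))]
    refine IsWeightedHomogeneous.add ?_ ?_
    · simpa [pow_succ, mul_comm] using hX₀
    · simpa [hdeg] using hX₁.mul ih

theorem X_one_mul_lacunarySum (m : ℕ) :
    ∑ k ∈ Finset.range m,
        (X 1 : MvPolynomial (Fin 2) R) ^ (1 + (p ^ m - p ^ (m - k)) / e) * X 0 ^ p ^ (m - k - 1)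
      = X 1 * lacunarySum R p e m := by
  simp only [lacunarySum, Finset.mul_sum, pow_add, pow_one, mul_assoc]

theorem isWeightedHomogeneous_X_one_pow_div (he : e ∣ p - 1) (n : ℕ) :
    IsWeightedHomogeneous ![p, e] ((X 1 : MvPolynomial (Fin 2) R) ^ ((p ^ n - 1) / e))
      (p ^ n - 1) := by
  have h := (isWeightedHomogeneous_X R ![p, e] 1).pow ((p ^ n - 1) / e)
  rwa [smul_eq_mul, Matrix.cons_val_one, Matrix.cons_val_zero, Nat.div_mul_cancel
    (by simpa using Nat.dvd_pow_sub_pow_of_dvd_sub_one_s15 he (Nat.zero_le n))] at h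

end LacunarySum

section Divisibility

variable {R : Type*} [CommRing R] [IsDomain R] {p e : ℕ}

theorem X_one_not_dvd_X_zero_pow (n : ℕ) : ¬ (X 1 : MvPolynomial (Fin 2) R) ∣ X 0 ^ n :=
  fun h => absurd (X_dvd_X.mp (X_prime.dvd_of_dvd_pow h)) (by decide)

theorem X_one_not_dvd_lacunarySum_succ (hp : 1 < p) (he : e ∣ p - 1) (m : ℕ) :
    ¬ (X 1 : MvPolynomial (Fin 2) R) ∣ lacunarySum R p e (m + 1) := by
  rw [lacunarySum_succ R (by omega) he]
  intro h
  refine X_one_not_dvd_X_zero_pow (p ^ m) ((dvd_add_left ?_).mp h)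
  exact (dvd_pow_self _ (by have := Nat.one_le_pow_succ_sub_pow_div hp he m; omega)).mul_right _

end Divisibility

section Bezout

variable (R : Type*) [CommRing R] {p e : ℕ}

theorem lacunarySum_bezout (hp : 1 < p) (he : e ∣ p - 1) (m : ℕ) :
    X 1 ^ (2 * ((p ^ (m + 1) - p ^ m) / e) - (p ^ (m + 1) - 1) / e) * lacunarySum R p e m ^ 2
        * X 1 ^ ((p ^ (m + 1) - 1) / e)
      + (X 0 ^ p ^ m - X 1 ^ ((p ^ (m + 1) - p ^ m) / e) * lacunarySum R p e m)
        * lacunarySum R p e (m + 1)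
      = X 0 ^ (2 * p ^ m) := by
  have hy : (X 1 : MvPolynomial (Fin 2) R) ^ (2 * ((p ^ (m + 1) - p ^ m) / e) -
        (p ^ (m + 1) - 1) / e) * X 1 ^ ((p ^ (m + 1) - 1) / e) =
      (X 1 ^ ((p ^ (m + 1) - p ^ m) / e)) ^ 2 := by
    rw [← pow_add, Nat.sub_add_cancel (Nat.pow_succ_sub_one_div_le hp he m), ← pow_mul,
      mul_comm]
  rw [lacunarySum_succ R (by omega) he, pow_mul' (X 0 : MvPolynomial (Fin 2) R) 2]
  linear_combination lacunarySum R p e m ^ 2 * hy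


theorem isWeightedHomogeneous_bezout_fst (hp : 1 < p) (he : e ∣ p - 1) (m : ℕ) :
    IsWeightedHomogeneous ![p, e]
      ((X 1 : MvPolynomial (Fin 2) R) ^ (2 * ((p ^ (m + 1) - p ^ m) / e) - (p ^ (m + 1) - 1) / e)
        * lacunarySum R p e m ^ 2) (p ^ (m + 1) + 1) := by
  have hX₁ : IsWeightedHomogeneous ![p, e] (X 1 : MvPolynomial (Fin 2) R) e :=
    isWeightedHomogeneous_X _ _ 1
  have h := (hX₁.pow (2 * ((p ^ (m + 1) - p ^ m) / e) - (p ^ (m + 1) - 1) / e)).mul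
    ((isWeightedHomogeneous_lacunarySum R (by omega) he m).pow 2)
  have hc := Nat.div_mul_cancel (Nat.dvd_pow_sub_pow_of_dvd_sub_one_s15 he (by omega : m ≤ m + 1))
  have hN := Nat.div_mul_cancel
    (by simpa using Nat.dvd_pow_sub_pow_of_dvd_sub_one_s15 he (Nat.zero_le (m + 1)))
  have hq : 2 * p ^ m ≤ p ^ (m + 1) := by rw [pow_succ]; nlinarith [Nat.one_le_pow m p (by omega)]
  have hq₀ := Nat.one_le_pow m p (by omega)
  rwa [smul_eq_mul, smul_eq_mul, Nat.sub_mul, Nat.mul_assoc, hc, hN,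
    show 2 * (p ^ (m + 1) - p ^ m) - (p ^ (m + 1) - 1) + 2 * p ^ m = p ^ (m + 1) + 1 by omega]
    at h

theorem isWeightedHomogeneous_bezout_snd (hp : 0 < p) (he : e ∣ p - 1) (m : ℕ) :
    IsWeightedHomogeneous ![p, e]
      ((X 0 : MvPolynomial (Fin 2) R) ^ p ^ m - X 1 ^ ((p ^ (m + 1) - p ^ m) / e)
        * lacunarySum R p e m) (p ^ (m + 1)) := by
  have hX₁ : IsWeightedHomogeneous ![p, e] (X 1 : MvPolynomial (Fin 2) R) e :=
    isWeightedHomogeneous_X _ _ 1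
  have h := (hX₁.pow ((p ^ (m + 1) - p ^ m) / e)).mul
    (isWeightedHomogeneous_lacunarySum R hp he m)
  have hc := Nat.div_mul_cancel (Nat.dvd_pow_sub_pow_of_dvd_sub_one_s15 he (by omega : m ≤ m + 1))
  have hq : p ^ m ≤ p ^ (m + 1) := Nat.pow_le_pow_right hp (by omega)
  rw [smul_eq_mul, hc, Nat.sub_add_cancel hq] at h
  refine IsWeightedHomogeneous.sub ?_ h
  simpa [pow_succ] using (isWeightedHomogeneous_X R ![p, e] 0).pow (p ^ m)

end Bezout

theorem stmt_15_general (p m e : ℕ) [Fact p.Prime] (hm : 1 ≤ m) (he : e ∣ p - 1) :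
    LinearMap.range (Fintype.linearCombination (MvPolynomial (Fin 2) (ZMod p))
        ![(X 1 : MvPolynomial (Fin 2) (ZMod p)) ^ (1 + (p ^ m - 1) / e),
          ∑ k ∈ Finset.range m,
            (X 1 : MvPolynomial (Fin 2) (ZMod p)) ^ (1 + (p ^ m - p ^ (m - k)) / e)
              * X 0 ^ p ^ (m - k - 1),
          (X 0 : MvPolynomial (Fin 2) (ZMod p)) ^ (2 * p ^ (m - 1))])
      = Ideal.span {(X 1 : MvPolynomial (Fin 2) (ZMod p)) ^ (1 + (p ^ m - 1) / e),
          ∑ k ∈ Finset.range m,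
            (X 1 : MvPolynomial (Fin 2) (ZMod p)) ^ (1 + (p ^ m - p ^ (m - k)) / e)
              * X 0 ^ p ^ (m - k - 1),
          (X 0 : MvPolynomial (Fin 2) (ZMod p)) ^ (2 * p ^ (m - 1))}
    ∧ ∃ b : Module.Basis (Fin 2) (MvPolynomial (Fin 2) (ZMod p))
        ↥(LinearMap.ker (Fintype.linearCombination (MvPolynomial (Fin 2) (ZMod p))
          ![(X 1 : MvPolynomial (Fin 2) (ZMod p)) ^ (1 + (p ^ m - 1) / e),
            ∑ k ∈ Finset.range m,
              (X 1 : MvPolynomial (Fin 2) (ZMod p)) ^ (1 + (p ^ m - p ^ (m - k)) / e)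
                * X 0 ^ p ^ (m - k - 1),
            (X 0 : MvPolynomial (Fin 2) (ZMod p)) ^ (2 * p ^ (m - 1))])),
        ∀ j : Fin 2, ∀ i : Fin 3,
          IsWeightedHomogeneous ![p, e] ((b j).1 i)
            (![2 * p ^ m + e, 2 * p ^ m + e - 1] j - ![p ^ m + e - 1, p ^ m + e, 2 * p ^ m] i) := by
  refine ⟨Fintype.range_linearCombination_fin_three _, ?_⟩
  have hp := (Fact.out : p.Prime).one_lt
  obtain ⟨m, rfl⟩ : ∃ n, m = n + 1 := ⟨m - 1, by omega⟩
  have hyu : IsRelPrime (X 1 : MvPolynomial (Fin 2) (ZMod p)) (X 0 ^ (2 * p ^ m)) :=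
    X_prime.irreducible.isRelPrime_iff_not_dvd.mpr (X_one_not_dvd_X_zero_pow _)
  have hag : IsRelPrime ((X 1 : MvPolynomial (Fin 2) (ZMod p)) ^ ((p ^ (m + 1) - 1) / e))
      (lacunarySum (ZMod p) p e (m + 1)) :=
    (X_prime.irreducible.isRelPrime_iff_not_dvd.mpr
      (X_one_not_dvd_lacunarySum_succ hp he m)).pow_left
  rw [X_one_mul_lacunarySum, pow_add, pow_one, Nat.add_sub_cancel]
  obtain ⟨b, hb⟩ := exists_basis_ker_linearCombination (X_ne_zero 1)
    (pow_ne_zero _ (X_ne_zero 1)) hyu hag (lacunarySum_bezout (ZMod p) hp he m)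
  have hQ := Nat.one_le_pow (m + 1) p (by omega)
  refine ⟨b, fun j i => ?_⟩
  rw [hb]
  fin_cases j <;> fin_cases i <;>
    simp only [Fin.zero_eta, Fin.mk_one, Fin.reduceFinMk, Matrix.cons_val]
  · rw [show 2 * p ^ (m + 1) + e - (p ^ (m + 1) + e - 1) = p ^ (m + 1) + 1 by omega]
    exact isWeightedHomogeneous_bezout_fst _ hp he m
  · rw [show 2 * p ^ (m + 1) + e - (p ^ (m + 1) + e) = p ^ (m + 1) by omega]
    exact isWeightedHomogeneous_bezout_snd _ (by omega) he m
  · rw [show 2 * p ^ (m + 1) + e - 2 * p ^ (m + 1) = e by omega]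
    exact (isWeightedHomogeneous_X _ _ 1).neg
  · rw [show 2 * p ^ (m + 1) + e - 1 - (p ^ (m + 1) + e - 1) = p ^ (m + 1) by omega]
    exact isWeightedHomogeneous_lacunarySum _ (by omega) he (m + 1)
  · rw [show 2 * p ^ (m + 1) + e - 1 - (p ^ (m + 1) + e) = p ^ (m + 1) - 1 by omega]
    exact (isWeightedHomogeneous_X_one_pow_div _ he (m + 1)).neg
  · exact isWeightedHomogeneous_zero _ _ _

/-- `S^G = F_p[f_1,f_2]` as an abstract polynomial ring in the two variables
`f_1 = X 0`, `f_2 = X 1`, weighted-graded by `deg f_1 = p`, `deg f_2 = e`.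
The syzygy module of `(h_0, h_1, h_2)` is free of rank `2`, with a basis of weighted
homogeneous syzygies of degrees `2p^m+e` and `2p^m+e−1`; together with the surjection
`(a,b,c) ↦ a h_0 + b h_1 + c h_2` onto `I = (h_0,h_1,h_2)`, this is the graded free
resolution `0 → S^G[−(2p^m+e)] ⊕ S^G[−(2p^m+e−1)] →
S^G[−(p^m+e−1)] ⊕ S^G[−(p^m+e)] ⊕ S^G[−2p^m] → I → 0`. -/
theorem stmt_15 (p m e : ℕ) [Fact p.Prime] (hm : 1 ≤ m) (he0 : 0 < e) (he : e ∣ p - 1) :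
    LinearMap.range (Fintype.linearCombination (MvPolynomial (Fin 2) (ZMod p))
        ![(X 1 : MvPolynomial (Fin 2) (ZMod p)) ^ (1 + (p ^ m - 1) / e),
          ∑ k ∈ Finset.range m,
            (X 1 : MvPolynomial (Fin 2) (ZMod p)) ^ (1 + (p ^ m - p ^ (m - k)) / e)
              * X 0 ^ p ^ (m - k - 1),
          (X 0 : MvPolynomial (Fin 2) (ZMod p)) ^ (2 * p ^ (m - 1))])
      = Ideal.span {(X 1 : MvPolynomial (Fin 2) (ZMod p)) ^ (1 + (p ^ m - 1) / e),
          ∑ k ∈ Finset.range m,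
            (X 1 : MvPolynomial (Fin 2) (ZMod p)) ^ (1 + (p ^ m - p ^ (m - k)) / e)
              * X 0 ^ p ^ (m - k - 1),
          (X 0 : MvPolynomial (Fin 2) (ZMod p)) ^ (2 * p ^ (m - 1))}
    ∧ ∃ b : Module.Basis (Fin 2) (MvPolynomial (Fin 2) (ZMod p))
        ↥(LinearMap.ker (Fintype.linearCombination (MvPolynomial (Fin 2) (ZMod p))
          ![(X 1 : MvPolynomial (Fin 2) (ZMod p)) ^ (1 + (p ^ m - 1) / e),
            ∑ k ∈ Finset.range m,
              (X 1 : MvPolynomial (Fin 2) (ZMod p)) ^ (1 + (p ^ m - p ^ (m - k)) / e)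
                * X 0 ^ p ^ (m - k - 1),
            (X 0 : MvPolynomial (Fin 2) (ZMod p)) ^ (2 * p ^ (m - 1))])),
        ∀ j : Fin 2, ∀ i : Fin 3,
          IsWeightedHomogeneous ![p, e] ((b j).1 i)
            (![2 * p ^ m + e, 2 * p ^ m + e - 1] j - ![p ^ m + e - 1, p ^ m + e, 2 * p ^ m] i) :=
  stmt_15_general p m e hm he
end

section
/- Let q be a prime power and f + 𝔪^{[q^m]} a GL_n(F_q)-invariant element of S/𝔪^{[q^m]} with f homogeneous in x_1,...,x_n having no monomial in 𝔪^{[q^m]}. Then either f is a scalar multiple of (x_1 x_2 ⋯ x_n)^{q^m−1}, or every monomial M of f satisfies deg_{x_i}(M) ≤ q^m − q for all i. -/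
/-!
A diagonal matrix `diag(1, …, t, …, 1)` multiplies the coefficient of `x^M` by `t^{M_i}`, and
coefficients of exponents below `q^m` are not affected by `𝔪^{[q^m]}`; so invariance forces
`q - 1 ∣ M_i` for every monomial of `f`, and an exponent above `q^m - q` must be `q^m - 1`.
If `M_i = q^m - 1` but `M_j < q^m - 1`, the transvection `x_i ↦ x_i + x_j` creates from `x^M` the
monomial `x^{M - e_i + e_j}` with coefficient `q^m - 1 = -1`; since all exponents of `f` are
below `q^m`, the only other contribution to that coefficient comes from `x^{M - e_i + e_j}`
itself, and invariance kills the coefficient of `x^M`. So such an `M` is `(q^m - 1, …, q^m - 1)`,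
and by homogeneity it is the only monomial of `f`.
-/

open MvPolynomial Matrix

/-- The `m`-th Frobenius power of the irrelevant ideal, `(x_1^N, …, x_n^N)`. -/
noncomputable def frobIdeal (F : Type) [Field F] (n N : ℕ) : Ideal (MvPolynomial (Fin n) F) :=
  Ideal.span (Set.range fun i : Fin n => (X i : MvPolynomial (Fin n) F) ^ N)

/-- The substitution action of `g ∈ GL_n(F)` on polynomials: `x_i ↦ Σ_j g_{ij} x_j`. -/
noncomputable def gSub {F : Type} [Field F] {n : ℕ} (g : GL (Fin n) F) :
    MvPolynomial (Fin n) F →ₐ[F] MvPolynomial (Fin n) F :=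
  aeval fun i => ∑ j, C ((g : Matrix (Fin n) (Fin n) F) i j) * X j

open Finset

theorem Finsupp.erase_add_single_add_single_eq_iff {σ : Type*} {i j : σ}
    (hij : i ≠ j) {N M : σ →₀ ℕ} {k : ℕ} (hk : k ≤ N i) :
    N.erase i + single i k + single j (N i - k) = M ↔
      k = M i ∧ M i + M j = N i + N j ∧ ∀ l, l ≠ i → l ≠ j → M l = N l := by
  classical
  simp only [Finsupp.ext_iff, Finsupp.add_apply, Finsupp.erase_apply, Finsupp.single_apply]
  constructor
  · intro h
    have hi := h i
    have hj := h j
    simp only [if_pos, if_neg hij, if_neg hij.symm] at hi hj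
    refine ⟨by omega, by omega, fun l hli hlj => ?_⟩
    have hl := h l
    simp only [if_neg hli, if_neg hli.symm, if_neg hlj.symm] at hl
    omega
  · rintro ⟨rfl, hsum, hrest⟩ l
    rcases eq_or_ne l i with rfl | hli
    · simp [hij.symm]
    rcases eq_or_ne l j with rfl | hlj
    · simp only [if_neg hli, if_neg hij, if_pos]
      omega
    simp only [if_neg hli, if_neg hli.symm, if_neg hlj.symm, hrest l hli hlj]
    omega

theorem Finsupp.eq_or_eq_of_apply_add_apply_eq {σ : Type*} {i j : σ}
    (hij : i ≠ j) {M N : σ →₀ ℕ} (hsum : N i + N j = M i + M j)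
    (hrest : ∀ l, l ≠ i → l ≠ j → N l = M l) (hlo : M i ≤ N i + 1) (hhi : N i ≤ M i) :
    N = M ∨ N = M + single j 1 - single i 1 := by
  classical
  rcases Nat.eq_or_lt_of_le hhi with hNi | hNi
  · refine .inl (Finsupp.ext fun l => ?_)
    rcases eq_or_ne l i with rfl | hli
    · exact hNi
    rcases eq_or_ne l j with rfl | hlj
    · omega
    exact hrest l hli hlj
  · refine .inr (Finsupp.ext fun l => ?_)
    simp only [tsub_apply, add_apply, single_apply]
    rcases eq_or_ne l i with rfl | hli
    · simp only [if_neg hij.symm, if_pos]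
      omega
    rcases eq_or_ne l j with rfl | hlj
    · simp only [if_neg hli.symm, if_pos]
      omega
    simp only [if_neg hli.symm, if_neg hlj.symm, hrest l hli hlj]
    rfl

namespace MvPolynomial

variable {σ R : Type*} [CommSemiring R]

theorem coeff_eq_zero_of_mem_span_X_pow {N : ℕ} {p : MvPolynomial σ R}
    (hp : p ∈ Ideal.span (Set.range fun i => (X i : MvPolynomial σ R) ^ N))
    {M : σ →₀ ℕ} (hM : ∀ i, M i < N) : p.coeff M = 0 := by
  have hspan : Set.range (fun i => (X i : MvPolynomial σ R) ^ N)
      = (fun s => monomial s (1 : R)) '' Set.range fun i => Finsupp.single i N := by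
    rw [← Set.range_comp]
    simp only [Function.comp_def, X_pow_eq_monomial]
  rw [hspan, mem_ideal_span_monomial_image] at hp
  by_contra h
  obtain ⟨_, ⟨i, rfl⟩, hle⟩ := hp M (mem_support_iff.mpr h)
  exact (hM i).not_ge (by simpa using hle i)

theorem aeval_C_mul_X_monomial [Fintype σ] (w : σ → R) (N : σ →₀ ℕ) (a : R) :
    aeval (fun i => C (w i) * X i) (monomial N a) = monomial N ((∏ i, w i ^ N i) * a) := by
  classical
  rw [aeval_monomial, monomial_eq, Finsupp.prod_fintype _ _ (by simp),
    Finsupp.prod_fintype _ _ (by simp)]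
  simp only [mul_pow, prod_mul_distrib, ← map_pow, ← map_prod, algebraMap_eq, C_mul]
  ring

theorem coeff_aeval_C_mul_X [Fintype σ] (w : σ → R) (p : MvPolynomial σ R)
    (M : σ →₀ ℕ) :
    (aeval (fun i => C (w i) * X i) p).coeff M = (∏ i, w i ^ M i) * p.coeff M := by
  classical
  induction p using MvPolynomial.induction_on' with
  | monomial N a =>
    rw [aeval_C_mul_X_monomial, coeff_monomial, coeff_monomial]
    split_ifs with h
    · rw [h]
    · rw [mul_zero]
  | add p q hp hq => rw [map_add, coeff_add, coeff_add, hp, hq, mul_add]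

theorem aeval_update_X_monomial [DecidableEq σ] (i : σ) (v : MvPolynomial σ R)
    (N : σ →₀ ℕ) (c : R) :
    aeval (Function.update X i v) (monomial N c) = monomial (N.erase i) c * v ^ N i := by
  have hsplit : monomial N c = monomial (N.erase i) c * X i ^ N i := by
    rw [X_pow_eq_monomial, monomial_mul, mul_one, Finsupp.erase_add_single]
  have hfix : aeval (Function.update X i v) (monomial (N.erase i) c) = monomial (N.erase i) c := by
    rw [aeval_monomial, monomial_eq, algebraMap_eq]
    congr 1
    refine Finsupp.prod_congr fun j hj => ?_
    rw [Function.update_of_ne (by rintro rfl; simp at hj)]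
  rw [hsplit, map_mul, hfix, map_pow, aeval_X, Function.update_self]

open Classical in
theorem coeff_aeval_update_X_add_X_monomial [DecidableEq σ] {i j : σ} (hij : i ≠ j)
    (N M : σ →₀ ℕ) (c : R) :
    (aeval (Function.update X i (X i + X j)) (monomial N c)).coeff M =
      if M i + M j = N i + N j ∧ ∀ l, l ≠ i → l ≠ j → M l = N l
      then c * (N i).choose (M i) else 0 := by
  rw [aeval_update_X_monomial, add_pow, mul_sum, coeff_sum]
  have hterm : ∀ k ∈ range (N i + 1),
      (monomial (N.erase i) c * ((X i : MvPolynomial σ R) ^ k * X j ^ (N i - k) *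
        ((N i).choose k : MvPolynomial σ R))).coeff M =
      if M i = k then (if M i + M j = N i + N j ∧ ∀ l, l ≠ i → l ≠ j → M l = N l
        then c * (N i).choose (M i) else 0) else 0 := by
    intro k hk
    have hmon : monomial (N.erase i) c * ((X i : MvPolynomial σ R) ^ k * X j ^ (N i - k) *
        ((N i).choose k : MvPolynomial σ R)) = monomial
          (N.erase i + Finsupp.single i k + Finsupp.single j (N i - k)) (c * (N i).choose k) := by
      rw [← map_natCast (C : R →+* MvPolynomial σ R), X_pow_eq_monomial, X_pow_eq_monomial,
        C_apply, monomial_mul, monomial_mul, monomial_mul, add_zero, one_mul, one_mul, add_assoc]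
    simp only [hmon, coeff_monomial,
      Finsupp.erase_add_single_add_single_eq_iff hij (Nat.lt_succ_iff.mp (mem_range.mp hk))]
    by_cases hk' : M i = k
    · subst hk'; simp
    · simp [hk', Ne.symm hk']
  rw [sum_congr rfl hterm, sum_ite_eq]
  split_ifs with hrange hc <;> try rfl
  rw [Nat.choose_eq_zero_of_lt (by simpa using hrange), Nat.cast_zero, mul_zero]

theorem coeff_aeval_update_X_add_X_of_forall_le [DecidableEq σ] {i j : σ} (hij : i ≠ j)
    {p : MvPolynomial σ R} {M : σ →₀ ℕ} (hM : M i ≠ 0)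
    (hp : ∀ N, p.coeff N ≠ 0 → N i ≤ M i) :
    (aeval (Function.update X i (X i + X j)) p).coeff
        (M + Finsupp.single j 1 - Finsupp.single i 1) =
      p.coeff (M + Finsupp.single j 1 - Finsupp.single i 1) + p.coeff M * (M i : R) := by
  classical
  set M' := M + Finsupp.single j 1 - Finsupp.single i 1
  have hM'i : M' i + 1 = M i := by
    simp only [M', Finsupp.tsub_apply, Finsupp.add_apply, Finsupp.single_eq_same,
      Finsupp.single_eq_of_ne hij]
    omega
  have hM'j : M' j = M j + 1 := by simp [M', hij.symm]
  have hM'l : ∀ l, l ≠ i → l ≠ j → M' l = M l := fun l hli hlj => by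
    simp [M', hli.symm, hlj.symm]
  conv_lhs => rw [p.as_sum, map_sum, coeff_sum]
  simp only [coeff_aeval_update_X_add_X_monomial hij]
  rw [sum_eq_add M' M (fun h => by have := DFunLike.congr_fun h i; omega)]
  · rw [if_pos ⟨rfl, fun _ _ _ => rfl⟩, if_pos ⟨by omega, hM'l⟩, Nat.choose_self, ← hM'i,
      Nat.choose_succ_self_right, Nat.cast_one, mul_one]
  · rintro N hN ⟨hNM', hNM⟩
    split_ifs with hcond
    · have hchoose : (N i).choose (M' i) = 0 := by
        by_contra h
        have hlo := not_lt.mp (Nat.choose_eq_zero_iff.not.mp h)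
        rcases Finsupp.eq_or_eq_of_apply_add_apply_eq hij (by omega)
          (fun l hli hlj => by rw [← hcond.2 l hli hlj, hM'l l hli hlj]) (by omega)
          (hp N (mem_support_iff.mp hN)) with rfl | rfl
        exacts [hNM rfl, hNM' rfl]
      rw [hchoose, Nat.cast_zero, mul_zero]
    · rfl
  all_goals intro h; simp [notMem_support_iff.mp h]

theorem IsHomogeneous.degree_eq {f : MvPolynomial σ R} {d : ℕ} (hf : f.IsHomogeneous d)
    {N : σ →₀ ℕ} (hN : f.coeff N ≠ 0) : N.degree = d :=
  not_not.mp fun h => hN (hf.coeff_eq_zero h)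

theorem IsHomogeneous.eq_monomial_of_forall_le {f : MvPolynomial σ R} {d : ℕ}
    (hf : f.IsHomogeneous d) {M : σ →₀ ℕ} (hM : f.coeff M ≠ 0)
    (hle : ∀ N, f.coeff N ≠ 0 → N ≤ M) : f = monomial M (f.coeff M) := by
  classical
  ext N
  rw [coeff_monomial]
  split_ifs with h
  · rw [h]
  by_contra hN
  have hdeg : N.degree = M.degree := by
    rw [hf.degree_eq hN, hf.degree_eq hM]
  have hzero : (M - N).degree = 0 := by
    have := map_add Finsupp.degree (M - N) N
    rw [tsub_add_cancel_of_le (hle N hN)] at this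
    omega
  rw [Finsupp.degree_eq_zero_iff, tsub_eq_zero_iff_le] at hzero
  exact h (le_antisymm hzero (hle N hN))

end MvPolynomial

theorem Nat.eq_pow_sub_one_of_sub_one_dvd {q m a : ℕ} (hdvd : q - 1 ∣ a) (ha : a < q ^ m)
    (hlt : q ^ m - q < a) : a = q ^ m - 1 := by
  have hpow : q - 1 ∣ q ^ m - 1 := by simpa using Nat.sub_dvd_pow_sub_pow q 1 m
  have := Nat.eq_zero_of_dvd_of_lt (Nat.dvd_sub hpow hdvd) (by omega)
  omega

section Invariants

variable {F : Type} [Field F] {n : ℕ}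

theorem gSub_of_coe_eq_diagonal {g : GL (Fin n) F} {w : Fin n → F}
    (hg : (g : Matrix (Fin n) (Fin n) F) = diagonal w) :
    gSub g = aeval fun i => C (w i) * X i := by
  simp [gSub, hg, diagonal_apply, apply_ite C, ite_mul]

theorem gSub_of_coe_eq_transvection {g : GL (Fin n) F} {i j : Fin n} (hij : i ≠ j)
    (hg : (g : Matrix (Fin n) (Fin n) F) = transvection i j 1) :
    gSub g = aeval (Function.update X i (X i + X j)) := by
  classical
  rw [gSub, hg]
  congr 1
  funext k
  simp only [transvection, Matrix.add_apply, one_apply, single_apply, map_add, add_mul,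
    sum_add_distrib, apply_ite C, map_one, map_zero, ite_mul, one_mul, zero_mul]
  rcases eq_or_ne k i with rfl | hk
  · simp
  · simp [hk, hk.symm]

theorem coeff_gSub_eq_of_sub_mem_frobIdeal {g : GL (Fin n) F} {f : MvPolynomial (Fin n) F}
    {Q : ℕ} (h : gSub g f - f ∈ frobIdeal F n Q) {M : Fin n →₀ ℕ} (hM : ∀ i, M i < Q) :
    (gSub g f).coeff M = f.coeff M := by
  rw [← sub_eq_zero, ← coeff_sub]
  exact coeff_eq_zero_of_mem_span_X_pow h hM

theorem card_sub_one_dvd_of_coeff_ne_zero [Fintype F] {f : MvPolynomial (Fin n) F} {Q : ℕ}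
    (hinv : ∀ g : GL (Fin n) F, gSub g f - f ∈ frobIdeal F n Q) {M : Fin n →₀ ℕ}
    (hM : ∀ i, M i < Q) (hf : f.coeff M ≠ 0) (i : Fin n) : Fintype.card F - 1 ∣ M i := by
  classical
  rw [← FiniteField.forall_pow_eq_one_iff]
  intro t
  let w : Fin n → F := Function.update 1 i t
  have hdet : (diagonal w).det ≠ 0 := by
    simp [det_diagonal, w, Finset.prod_update_of_mem]
  have hcoeff := coeff_gSub_eq_of_sub_mem_frobIdeal
    (hinv (GeneralLinearGroup.mkOfDetNeZero _ hdet)) hM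
  rw [gSub_of_coe_eq_diagonal rfl, coeff_aeval_C_mul_X,
    Fintype.prod_eq_single i fun j hj => by simp [w, hj]] at hcoeff
  ext
  simpa [w, hf] using hcoeff

theorem coeff_eq_zero_of_apply_eq_sub_one_of_apply_lt {f : MvPolynomial (Fin n) F} {Q : ℕ}
    (hinv : ∀ g : GL (Fin n) F, gSub g f - f ∈ frobIdeal F n Q) (hQ : (Q : F) = 0)
    (hno : ∀ M : Fin n →₀ ℕ, f.coeff M ≠ 0 → ∀ i, M i < Q) {M : Fin n →₀ ℕ}
    {i j : Fin n} (hij : i ≠ j) (hMi : M i = Q - 1) (hMj : M j < Q - 1) : f.coeff M = 0 := by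
  classical
  by_contra hM
  set M' : Fin n →₀ ℕ := M + Finsupp.single j 1 - Finsupp.single i 1
  have hM'lt : ∀ l, M' l < Q := fun l => by
    simp only [M', Finsupp.tsub_apply, Finsupp.add_apply, Finsupp.single_apply]
    have := hno M hM l
    split_ifs <;> subst_vars <;> omega
  let g := GeneralLinearGroup.mkOfDetNeZero (transvection i j (1 : F))
    (by rw [det_transvection_of_ne _ _ hij]; exact one_ne_zero)
  have hcoeff := coeff_gSub_eq_of_sub_mem_frobIdeal (hinv g) hM'lt
  have hMi_cast : ((M i : ℕ) : F) = -1 := by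
    rw [hMi, Nat.cast_sub (by omega), hQ, Nat.cast_one, zero_sub]
  rw [gSub_of_coe_eq_transvection hij rfl,
    coeff_aeval_update_X_add_X_of_forall_le hij (by omega) fun N hN => hMi ▸ by
      have := hno N hN i; omega, hMi_cast, mul_neg_one] at hcoeff
  exact hM (neg_eq_zero.mp (add_eq_left.mp hcoeff))

end Invariants

theorem stmt_19_general (q n m : ℕ) (F : Type) [Field F] [Fintype F] (hq : Fintype.card F = q)
    (hm : 1 ≤ m)
    (f : MvPolynomial (Fin n) F) (d : ℕ) (hf : f.IsHomogeneous d)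
    (hno : ∀ M : Fin n →₀ ℕ, f.coeff M ≠ 0 → ∀ i, M i < q ^ m)
    (hinv : ∀ g : GL (Fin n) F, gSub g f - f ∈ frobIdeal F n (q ^ m)) :
    (∃ c : F, f = C c * ∏ i : Fin n, X i ^ (q ^ m - 1))
      ∨ ∀ M : Fin n →₀ ℕ, f.coeff M ≠ 0 → ∀ i, M i ≤ q ^ m - q := by
  refine or_iff_not_imp_right.mpr fun hlarge => ?_
  push Not at hlarge
  obtain ⟨M, hM, i, hMi⟩ := hlarge
  subst hq
  have hQ : ((Fintype.card F ^ m : ℕ) : F) = 0 := by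
    rw [Nat.cast_pow, FiniteField.cast_card_eq_zero, zero_pow (by omega)]
  have htop : ∀ l, M l = Fintype.card F ^ m - 1 := by
    have hMi_top := Nat.eq_pow_sub_one_of_sub_one_dvd
      (card_sub_one_dvd_of_coeff_ne_zero hinv (hno M hM) hM i) (hno M hM i) hMi
    intro l
    rcases eq_or_ne i l with rfl | hil
    · exact hMi_top
    by_contra hl
    exact hM (coeff_eq_zero_of_apply_eq_sub_one_of_apply_lt hinv hQ hno hil hMi_top
      (by have := hno M hM l; omega))
  refine ⟨f.coeff M, ?_⟩
  calc f = monomial M (f.coeff M) := hf.eq_monomial_of_forall_le hM fun N hN =>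
        Finsupp.le_def.mpr fun l => htop l ▸ Nat.le_sub_one_of_lt (hno N hN l)
    _ = _ := by
      rw [monomial_eq, Finsupp.prod_fintype _ _ fun _ => pow_zero _]
      simp only [htop]

/-- If `f + 𝔪^{[q^m]}` is `GL_n(F_q)`-invariant, `f` is homogeneous and no monomial of
`f` lies in `𝔪^{[q^m]}`, then either `f` is a scalar multiple of `(x_1⋯x_n)^{q^m−1}`
or every monomial `M` of `f` has `deg_{x_i}(M) ≤ q^m − q` for all `i`. -/
theorem stmt_19 (q n m : ℕ) (F : Type) [Field F] [Fintype F] (hq : Fintype.card F = q)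
    (hm : 1 ≤ m) (hn : 1 ≤ n)
    (f : MvPolynomial (Fin n) F) (d : ℕ) (hf : f.IsHomogeneous d)
    (hno : ∀ M : Fin n →₀ ℕ, f.coeff M ≠ 0 → ∀ i, M i < q ^ m)
    (hinv : ∀ g : GL (Fin n) F, gSub g f - f ∈ frobIdeal F n (q ^ m)) :
    (∃ c : F, f = C c * ∏ i : Fin n, X i ^ (q ^ m - 1))
      ∨ ∀ M : Fin n →₀ ℕ, f.coeff M ≠ 0 → ∀ i, M i ≤ q ^ m - q :=
  stmt_19_general q n m F hq hm f d hf hno hinv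
end
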